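/- Let F : ℝ → ℝ be a lift of an orientation-preserving circle homeomorphism whose induced circle homeomorphism is minimal, and let (G_t)_{t∈[0,1]} be a continuous family of lifts of orientation-preserving circle homeomorphisms with G₀ = id_ℝ and such that for every x ∈ ℝ the map t ↦ G_t(x) is strictly increasing. Then for every ε ∈ (0,1] there exists η > 0 such that: for all coprime integers p, q with q ≥ 1 and τ(F) ≤ p/q ≤ τ(F) + η, and for every x ∈ ℝ, there exists t ∈ [0,ε] with (G_t ∘ F)^q(x) = x + p. In particular τ(G_t ∘ F) = p/q, and the orbit of x mod 1 under the circle homeomorphism induced by G_t ∘ F is periodic of minimal period q (hence of cyclic order p/q). -/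

import Mathlib

open Set Filter

/-- A lift of an orientation-preserving circle homeomorphism: a continuous strictly increasing
surjection `F : ℝ → ℝ` with `F(x+1) = F(x)+1` for all `x`. -/
def IsCircleLift (F : ℝ → ℝ) : Prop :=
  Continuous F ∧ StrictMono F ∧ Function.Surjective F ∧ ∀ x : ℝ, F (x + 1) = F x + 1

/-- `τ` is the translation number of the lift `F`: `(Fⁿ(x) − x)/n → τ` for every `x`.
The rotation number of the induced circle homeomorphism is `τ` mod 1. -/
def HasTransNum (F : ℝ → ℝ) (τ : ℝ) : Prop :=
  ∀ x : ℝ, Tendsto (fun n : ℕ => (F^[n] x - x) / (n : ℝ)) atTop (nhds τ)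

/-- The circle homeomorphism induced by the lift `F` is minimal: for every `x ∈ ℝ` the full
orbit `{Fⁿ(x) + m : n, m ∈ ℤ}` is dense in `ℝ` (`y` belongs to this set iff `Fⁿ(x) + m = y`
for some `n ∈ ℕ, m ∈ ℤ`, or `Fⁿ(y) + m = x` for some `n ∈ ℕ, m ∈ ℤ`). -/
def IsMinimalLift (F : ℝ → ℝ) : Prop :=
  ∀ x : ℝ, Dense {y : ℝ | ∃ n : ℕ, ∃ m : ℤ, F^[n] x + (m : ℝ) = y ∨ F^[n] y + (m : ℝ) = x}

/-!
Minimality of `F` rules out periodic orbits, so `τ(F)` is irrational and the Poincaré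
semiconjugacy `h` of `F` to the rotation by `τ(F)` is strictly increasing. As `G_ε ≥ id + δ`,
each application of `G_ε ∘ F` moves `h` by at least `τ(F) + c` for a fixed `c > 0`, whence
`(G_ε ∘ F)^q(x) ≥ x + q (τ(F) + c) - 2`. Rationals `p/q` close to `τ(F)` from above have large
denominators, so `F^q(x) < x + p ≤ (G_ε ∘ F)^q(x)` and the intermediate value theorem in `t`
yields `(G_t ∘ F)^q(x) = x + p`. Coprimality of `p` and `q` makes `q` the minimal period.
-/

open Function

theorem Irrational.eq_zero_of_natCast_mul_add_intCast_eq_zero {τ : ℝ} (hτ : Irrational τ)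
    {n : ℕ} {m : ℤ} (h : n * τ + m = 0) : n = 0 ∧ m = 0 := by
  by_cases hn : n = 0
  · subst hn
    exact ⟨rfl, by simpa using h⟩
  · exact absurd h ((hτ.natCast_mul hn).add_intCast m).ne_zero

theorem Irrational.exists_pos_add_lt_div {τ : ℝ} (hτ : Irrational τ) (Q : ℕ) :
    ∃ η > 0, ∀ q : ℕ, 0 < q → q ≤ Q → ∀ p : ℤ, τ ≤ p / q → τ + η < p / q := by
  set N := Q.factorial
  have hN : (0 : ℝ) < N := by positivity
  have hceil : τ < ⌈N * τ⌉ / N := by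
    rw [lt_div_iff₀ hN, mul_comm]
    exact (Int.le_ceil _).lt_of_ne ((hτ.natCast_mul Q.factorial_ne_zero).ne_int _)
  refine ⟨(⌈N * τ⌉ / N - τ) / 2, by linarith, fun q hq hqQ p hp => ?_⟩
  -- `p / q = p k / N` with `N = q k`, and `τ ≤ p k / N` forces `⌈N τ⌉ ≤ p k`.
  obtain ⟨k, hk⟩ := Nat.dvd_factorial hq hqQ
  have hNqk : (N : ℝ) = q * k := by exact_mod_cast hk
  have hqpos : (0 : ℝ) < q := by exact_mod_cast hq
  have hpk : ⌈N * τ⌉ ≤ p * k := by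
    rw [Int.ceil_le, hNqk]
    push_cast
    nlinarith [(le_div_iff₀ hqpos).1 hp]
  have : (⌈N * τ⌉ : ℝ) / N ≤ p / q := by
    have hpk' : (⌈N * τ⌉ : ℝ) ≤ p * k := by exact_mod_cast hpk
    rw [div_le_div_iff₀ hN hqpos]
    calc (⌈N * τ⌉ : ℝ) * q ≤ p * k * q := mul_le_mul_of_nonneg_right hpk' hqpos.le
      _ = p * N := by rw [hNqk]; ring
  linarith

theorem Irrational.exists_pos_forall_mul_lt_and_add_two_le {τ c : ℝ} (hτ : Irrational τ)
    (hc : 0 < c) : ∃ η > 0, ∀ (p : ℤ) (q : ℕ), 0 < q → τ ≤ p / q → p / q ≤ τ + η →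
      q * τ < p ∧ p + 2 ≤ q * (τ + c) := by
  obtain ⟨η, hη, hfar⟩ := hτ.exists_pos_add_lt_div ⌈4 / c⌉₊
  refine ⟨min η (c / 2), by positivity, fun p q hq hlo hhi => ⟨?_, ?_⟩⟩
  · have hqpos : (0 : ℝ) < q := by exact_mod_cast hq
    exact ((le_div_iff₀' hqpos).1 hlo).lt_of_ne ((hτ.natCast_mul hq.ne').ne_int p)
  · have hqpos : (0 : ℝ) < q := by exact_mod_cast hq
    have hqc : 4 ≤ q * c := by
      have hQq : ⌈4 / c⌉₊ < q := not_le.1 fun hqQ =>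
        (hfar q hq hqQ p hlo).not_ge (hhi.trans (by gcongr; exact min_le_left _ _))
      rw [← div_le_iff₀ hc]
      exact (Nat.le_ceil _).trans (by exact_mod_cast hQq.le)
    have hpc : (p : ℝ) ≤ q * (τ + c / 2) :=
      (div_le_iff₀' hqpos).1 (hhi.trans (add_le_add_right (min_le_right η (c / 2)) τ))
    nlinarith

theorem continuousOn_iterate_apply {α β : Type*} [TopologicalSpace α] [TopologicalSpace β]
    {Φ : α → β → β} {s : Set α} (hΦ : ContinuousOn (uncurry Φ) (s ×ˢ univ)) (n : ℕ) (x : β) :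
    ContinuousOn (fun t => (Φ t)^[n] x) s := by
  induction n with
  | zero => exact continuousOn_const
  | succ n ih =>
    simp only [iterate_succ_apply']
    exact hΦ.comp (continuousOn_id.prodMk ih) fun t ht => ⟨ht, mem_univ _⟩

theorem exists_mem_Icc_iterate_apply_eq {Φ : ℝ → ℝ → ℝ} {a b : ℝ} (hab : a ≤ b)
    (hΦ : ContinuousOn (uncurry Φ) (Icc a b ×ˢ univ)) {n : ℕ} {x y : ℝ}
    (ha : (Φ a)^[n] x ≤ y) (hb : y ≤ (Φ b)^[n] x) : ∃ t ∈ Icc a b, (Φ t)^[n] x = y :=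
  intermediate_value_Icc hab (continuousOn_iterate_apply hΦ n x) ⟨ha, hb⟩

namespace IsCircleLift

variable {F : ℝ → ℝ}

def toCircleDeg1Lift (hF : IsCircleLift F) : CircleDeg1Lift :=
  ⟨⟨F, hF.2.1.monotone⟩, hF.2.2.2⟩

@[simp]
theorem coe_toCircleDeg1Lift (hF : IsCircleLift F) : ⇑hF.toCircleDeg1Lift = F :=
  rfl

theorem isUnit_toCircleDeg1Lift (hF : IsCircleLift F) : IsUnit hF.toCircleDeg1Lift :=
  CircleDeg1Lift.isUnit_iff_bijective.2 ⟨hF.2.1.injective, hF.2.2.1⟩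

end IsCircleLift

namespace CircleDeg1Lift

variable {f : CircleDeg1Lift}

theorem hasTransNum_iff {τ : ℝ} : HasTransNum f τ ↔ f.translationNumber = τ := by
  constructor
  · intro h
    exact tendsto_nhds_unique (by simpa only [coe_pow] using f.tendsto_translationNumber 0) (h 0)
  · rintro rfl x
    simpa only [coe_pow] using f.tendsto_translationNumber x

theorem iterate_add_int (f : CircleDeg1Lift) (n : ℕ) (x : ℝ) (m : ℤ) :
    f^[n] (x + m) = f^[n] x + m := by
  rw [← coe_pow, map_add_int]

theorem iterate_mul_apply_of_iterate_eq_add_int {q : ℕ} {x : ℝ} {p : ℤ}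
    (hx : f^[q] x = x + p) (k : ℕ) : f^[q * k] x = x + k * p := by
  rw [iterate_mul, ← coe_pow]
  exact (f ^ q).iterate_eq_of_map_eq_add_int (by rwa [coe_pow]) k

theorem iterate_apply_of_iterate_eq_add_int {q : ℕ} {x : ℝ} {p : ℤ}
    (hx : f^[q] x = x + p) (j : ℕ) : f^[j] x = f^[j % q] x + (j / q : ℕ) * p := by
  conv_lhs => rw [← Nat.mod_add_div j q, iterate_add_apply,
    iterate_mul_apply_of_iterate_eq_add_int hx]
  simpa only [Int.cast_mul, Int.cast_natCast] using f.iterate_add_int (j % q) x ((j / q : ℕ) * p)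

theorem iterate_ne_add_int_of_isMinimalLift (hinj : Injective f) (hmin : IsMinimalLift f)
    {q : ℕ} (hq : 0 < q) (x : ℝ) (p : ℤ) : f^[q] x ≠ x + p := by
  intro hx
  -- A periodic orbit is contained in finitely many translates of `ℤ`: a closed countable set.
  set C : Set ℝ := ⋃ r ∈ Finset.range q, range fun m : ℤ => f^[r] x + m
  have hmemC (j : ℕ) (m : ℤ) : f^[j] x + m ∈ C :=
    mem_biUnion (Finset.mem_range.2 (Nat.mod_lt j hq)) ⟨(j / q : ℕ) * p + m, by
      simp only [iterate_apply_of_iterate_eq_add_int hx j, Int.cast_add, Int.cast_mul,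
        Int.cast_natCast, add_assoc]⟩
  have horbit : {y | ∃ n : ℕ, ∃ m : ℤ, f^[n] x + m = y ∨ f^[n] y + m = x} ⊆ C := by
    rintro y ⟨n, m, rfl | hy⟩
    · exact hmemC n m
    · have hy' : y = f^[q * n - n] x + (-m - n * p : ℤ) := (hinj.iterate n) <| by
        rw [iterate_add_int, ← iterate_add_apply, Nat.add_sub_cancel' (Nat.le_mul_of_pos_left n hq),
          iterate_mul_apply_of_iterate_eq_add_int hx]
        push_cast
        linarith
      exact hy' ▸ hmemC _ _
  have hclosed : IsClosed C :=
    (Finset.range q).finite_toSet.isClosed_biUnion fun r _ => by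
      convert (Homeomorph.addLeft (f^[r] x)).isClosedMap _
        Int.isClosedEmbedding_coe_real.isClosed_range using 1
      rw [← range_comp]
      rfl
  have hC : C = univ := hclosed.closure_eq ▸ ((hmin x).mono horbit).closure_eq
  exact Cardinal.not_countable_real <| hC ▸
    (Finset.range q).countable_toSet.biUnion fun r _ => countable_range _

theorem irrational_translationNumber_of_isMinimalLift (hcont : Continuous f) (hinj : Injective f)
    (hmin : IsMinimalLift f) : Irrational f.translationNumber := by
  rintro ⟨r, hr⟩
  rw [Rat.cast_def] at hr
  obtain ⟨x, hx⟩ := (f.translationNumber_eq_rat_iff hcont r.den_pos).1 hr.symm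
  exact iterate_ne_add_int_of_isMinimalLift hinj hmin r.den_pos x r.num (by rwa [← coe_pow])

theorem exists_semiconj_translationNumber_add (hf : IsUnit f) :
    ∃ h : CircleDeg1Lift, Semiconj h f (f.translationNumber + ·) := by
  obtain ⟨h, hh⟩ := semiconj_of_isUnit_of_translationNumber_eq hf
    (translate (Multiplicative.ofAdd f.translationNumber)).isUnit (translationNumber_translate _).symm
  exact ⟨h, fun x => (hh x).trans (translate_apply _ _)⟩

theorem strictMono_of_semiconj_add_irrational {h : CircleDeg1Lift} {τ : ℝ} (hτ : Irrational τ)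
    (hmin : IsMinimalLift f) (hsc : Semiconj h f (τ + ·)) : StrictMono h := by
  have hiter (n : ℕ) (y : ℝ) : h (f^[n] y) = n * τ + h y := by
    rw [(hsc.iterate_right n).eq, add_left_iterate, nsmul_eq_mul]
  -- A plateau `h a = h b` would contain an orbit point of `a`, i.e. `n τ + m = 0` with `(n, m) ≠ 0`.
  intro a b hab
  refine (h.monotone hab.le).lt_of_ne fun hab' => ?_
  obtain ⟨y, ⟨n, m, hy⟩, hay, hyb⟩ := (hmin a).exists_between hab
  have hya : h y = h a := le_antisymm (hab' ▸ h.monotone hyb.le) (h.monotone hay.le)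
  rcases hy with hy | hy
  · have hnm : n * τ + m = 0 := by
      rw [← hy, map_add_int, hiter] at hya
      linarith
    obtain ⟨rfl, rfl⟩ := hτ.eq_zero_of_natCast_mul_add_intCast_eq_zero hnm
    simp only [iterate_zero, id_eq, Int.cast_zero, add_zero] at hy
    exact hay.ne hy
  · have hnm : n * τ + m = 0 := by
      have := congrArg h hy
      rw [map_add_int, hiter] at this
      linarith
    obtain ⟨rfl, rfl⟩ := hτ.eq_zero_of_natCast_mul_add_intCast_eq_zero hnm
    simp only [iterate_zero, id_eq, Int.cast_zero, add_zero] at hy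
    exact hay.ne' hy

theorem exists_pos_forall_add_le_map_add {h : CircleDeg1Lift} (hh : StrictMono h) {δ : ℝ}
    (hδ : 0 < δ) : ∃ c > 0, ∀ z, h z + c ≤ h (z + δ) := by
  -- On the grid `ℤ / N` with `2 / N ≤ δ`, every `[z, z + δ]` contains a whole grid interval.
  set N := ⌈2 / δ⌉₊ + 1
  have hN : (0 : ℝ) < N := by positivity
  have hNδ : 2 / N ≤ δ := by
    rw [div_le_iff₀ hN, ← div_le_iff₀' hδ]
    exact (Nat.le_ceil _).trans (by simp [N])
  have hne : (Finset.range N).Nonempty := Finset.nonempty_range_iff.2 (by positivity)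
  set g : ℕ → ℝ := fun i => h ((i + 2) / N) - h ((i + 1) / N)
  refine ⟨(Finset.range N).inf' hne g, ?_, fun z => ?_⟩
  · refine (Finset.lt_inf'_iff hne).2 fun i _ => sub_pos.2 (hh ?_)
    gcongr
    norm_num
  set w := Int.fract z
  suffices h w + (Finset.range N).inf' hne g ≤ h (w + δ) by
    rw [← Int.fract_add_floor z, add_right_comm, map_add_int, map_add_int]
    linarith
  set i := ⌊w * N⌋₊
  have hwN : 0 ≤ w * N := by positivity
  have hiN : i ∈ Finset.range N := by
    rw [Finset.mem_range, Nat.floor_lt hwN]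
    exact mul_lt_of_lt_one_left hN (Int.fract_lt_one z)
  have hiw : (i + 1) / N ≥ w := by
    rw [ge_iff_le, le_div_iff₀ hN]
    exact (Nat.lt_floor_add_one _).le
  have hwi : (i + 2) / N ≤ w + δ := by
    have : (i : ℝ) / N ≤ w := by rw [div_le_iff₀ hN]; exact Nat.floor_le hwN
    calc ((i : ℝ) + 2) / N = i / N + 2 / N := add_div _ _ _
      _ ≤ w + δ := add_le_add this hNδ
  have hgi : (Finset.range N).inf' hne g ≤ h ((i + 2) / N) - h ((i + 1) / N) :=
    Finset.inf'_le g hiN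
  linarith [h.monotone hiw, h.monotone hwi]

theorem add_mul_sub_two_le_iterate {h : CircleDeg1Lift} {τ c δ : ℝ} {K : ℝ → ℝ}
    (hsc : Semiconj h f (τ + ·)) (hgap : ∀ z, h z + c ≤ h (z + δ)) (hK : ∀ z, f z + δ ≤ K z)
    (n : ℕ) (z : ℝ) : z + n * (τ + c) - 2 ≤ K^[n] z := by
  have hstep (y : ℝ) : h y + (τ + c) ≤ h (K y) :=
    calc h y + (τ + c) = h (f y) + c := by rw [hsc.eq]; ring
      _ ≤ h (f y + δ) := hgap _
      _ ≤ h (K y) := h.monotone (hK y)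
  have hiter : h z + n * (τ + c) ≤ h (K^[n] z) := by
    induction n with
    | zero => simp
    | succ n ih =>
      rw [iterate_succ_apply']
      push_cast
      linarith [hstep (K^[n] z)]
  -- `h` stays within distance `1` of `h 0 + id`.
  linarith [h.map_le_of_map_zero (K^[n] z), Int.ceil_lt_add_one (K^[n] z),
    h.le_map_of_map_zero z, Int.sub_one_lt_floor z]

theorem exists_pos_add_mul_le_iterate_of_isMinimalLift (hf : IsUnit f) (hcont : Continuous f)
    (hmin : IsMinimalLift f) {δ : ℝ} (hδ : 0 < δ) :
    ∃ c > 0, ∀ K : ℝ → ℝ, (∀ z, f z + δ ≤ K z) →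
      ∀ (n : ℕ) (z : ℝ), z + n * (f.translationNumber + c) - 2 ≤ K^[n] z := by
  obtain ⟨h, hsc⟩ := exists_semiconj_translationNumber_add hf
  have hirr := irrational_translationNumber_of_isMinimalLift hcont
    (isUnit_iff_bijective.1 hf).injective hmin
  obtain ⟨c, hc, hgap⟩ :=
    exists_pos_forall_add_le_map_add (strictMono_of_semiconj_add_irrational hirr hmin hsc) hδ
  exact ⟨c, hc, fun K hK => add_mul_sub_two_le_iterate hsc hgap hK⟩

theorem exists_pos_forall_add_le_of_forall_lt (hcont : Continuous f) (hlt : ∀ x, x < f x) :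
    ∃ δ > 0, ∀ x, x + δ ≤ f x := by
  obtain ⟨y, -, hy⟩ := isCompact_Icc.exists_isMinOn (nonempty_Icc.2 zero_le_one)
    (hcont.sub continuous_id).continuousOn
  refine ⟨f y - y, sub_pos.2 (hlt y), fun x => ?_⟩
  have := f.forall_map_sub_of_Icc (f y - y ≤ ·) (fun z hz => hy hz) x
  linarith

theorem iterate_lt_add_int_of_mul_translationNumber_lt {q : ℕ} {p : ℤ}
    (h : q * f.translationNumber < p) (x : ℝ) : f^[q] x < x + p := by
  simpa only [coe_pow] using
    (f ^ q).map_lt_of_translationNumber_lt_int (by rwa [translationNumber_pow]) x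

theorem iterate_ne_add_int_of_lt_of_gcd_eq_one {q : ℕ} {p : ℤ} {x : ℝ}
    (hx : f^[q] x = x + p) (hq : 0 < q) (hpq : Int.gcd p q = 1) {k : ℕ} (hk : 0 < k)
    (hkq : k < q) (m : ℤ) : f^[k] x ≠ x + m := by
  intro hkx
  have hτq := f.translationNumber_of_map_pow_eq_add_int (by rwa [coe_pow]) hq
  have hτk := f.translationNumber_of_map_pow_eq_add_int (by rwa [coe_pow]) hk
  have hcross : p * k = m * q := by
    have hq' : (q : ℝ) ≠ 0 := by positivity
    have hk' : (k : ℝ) ≠ 0 := by positivity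
    rw [hτq, div_eq_div_iff hq' hk'] at hτk
    exact_mod_cast hτk
  have hqk : (q : ℤ) ∣ k :=
    (Int.isCoprime_iff_gcd_eq_one.2 hpq).symm.dvd_of_dvd_mul_left ⟨m, by rw [hcross, mul_comm]⟩
  exact hkq.not_ge (Nat.le_of_dvd hk (Int.natCast_dvd_natCast.1 hqk))

end CircleDeg1Lift

/-- If the circle homeomorphism induced by `F` is minimal and `(G_t)_{t∈[0,1]}` is a
continuous family of lifts with `G₀ = id` and `t ↦ G_t(x)` strictly increasing for every
`x`, then for every `ε ∈ (0,1]` there is `η > 0` such that: for all coprime `p, q` with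
`q ≥ 1` and `τ(F) ≤ p/q ≤ τ(F) + η` and every `x ∈ ℝ`, there exists `t ∈ [0,ε]` with
`(G_t ∘ F)^q(x) = x + p`; in particular `τ(G_t ∘ F) = p/q` and the orbit of `x mod 1` under
the induced circle homeomorphism is periodic of minimal period `q` (hence of cyclic order
`p/q`). -/
theorem realization_of_nearby_rational_rotation_numbers
    (F : ℝ → ℝ) (hF : IsCircleLift F) (hmin : IsMinimalLift F)
    (G : ℝ → ℝ → ℝ)
    (hGcont : ContinuousOn (fun p : ℝ × ℝ => G p.1 p.2) (Icc 0 1 ×ˢ univ))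
    (hGlift : ∀ t ∈ Icc (0:ℝ) 1, IsCircleLift (G t))
    (hG0 : G 0 = id)
    (hGstrict : ∀ x : ℝ, StrictMonoOn (fun t => G t x) (Icc 0 1))
    (τF : ℝ) (hτF : HasTransNum F τF) :
    ∀ ε ∈ Ioc (0:ℝ) 1, ∃ η > (0:ℝ),
      ∀ p : ℤ, ∀ q : ℕ, 1 ≤ q → Int.gcd p (q : ℤ) = 1 →
        τF ≤ (p : ℝ) / (q : ℝ) → (p : ℝ) / (q : ℝ) ≤ τF + η →
        ∀ x : ℝ, ∃ t ∈ Icc (0:ℝ) ε,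
          (fun z => G t (F z))^[q] x = x + (p : ℝ) ∧
          HasTransNum (fun z => G t (F z)) ((p : ℝ) / (q : ℝ)) ∧
          ∀ k : ℕ, 0 < k → k < q → ∀ m : ℤ, (fun z => G t (F z))^[k] x ≠ x + (m : ℝ) := by
  rintro ε ⟨hε0, hε1⟩
  set f := hF.toCircleDeg1Lift
  have hτ : f.translationNumber = τF := CircleDeg1Lift.hasTransNum_iff.1 hτF
  have hirr : Irrational τF :=
    hτ ▸ f.irrational_translationNumber_of_isMinimalLift hF.1 hF.2.1.injective hmin
  have hGε := hGlift ε ⟨hε0.le, hε1⟩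
  obtain ⟨δ, hδ, hGεδ⟩ := hGε.toCircleDeg1Lift.exists_pos_forall_add_le_of_forall_lt hGε.1
    fun z => by simpa [hG0] using hGstrict z ⟨le_rfl, zero_le_one⟩ ⟨hε0.le, hε1⟩ hε0
  obtain ⟨c, hc, hgrowth⟩ :=
    f.exists_pos_add_mul_le_iterate_of_isMinimalLift hF.isUnit_toCircleDeg1Lift hF.1 hmin hδ
  obtain ⟨η, hη, hpq_bounds⟩ := hirr.exists_pos_forall_mul_lt_and_add_two_le hc
  refine ⟨η, hη, fun p q hq hpq hlo hhi x => ?_⟩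
  obtain ⟨hpτ, hpc⟩ := hpq_bounds p q hq hlo hhi
  have hstart : (fun z => G 0 (F z))^[q] x ≤ x + p := by
    rw [show (fun z => G 0 (F z)) = F by simp [hG0]]
    exact (f.iterate_lt_add_int_of_mul_translationNumber_lt (hτ ▸ hpτ) x).le
  have hend : x + p ≤ (fun z => G ε (F z))^[q] x := by
    refine le_trans ?_ (hgrowth (fun z => G ε (F z)) (fun z => hGεδ (F z)) q x)
    rw [hτ]
    linarith
  have hcont : ContinuousOn (uncurry fun t z => G t (F z)) (Icc 0 ε ×ˢ univ) :=
    hGcont.comp (continuousOn_fst.prodMk (hF.1.comp_continuousOn continuousOn_snd))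
      fun p hp => ⟨⟨hp.1.1, hp.1.2.trans hε1⟩, mem_univ _⟩
  obtain ⟨t, ht, htq⟩ := exists_mem_Icc_iterate_apply_eq hε0.le hcont hstart hend
  obtain ⟨g, hg⟩ : ∃ g : CircleDeg1Lift, ⇑g = fun z => G t (F z) :=
    ⟨(hGlift t ⟨ht.1, ht.2.trans hε1⟩).toCircleDeg1Lift * f, rfl⟩
  refine ⟨t, ht, ?_⟩
  rw [← hg] at htq ⊢
  exact ⟨htq, CircleDeg1Lift.hasTransNum_iff.2
    (g.translationNumber_of_map_pow_eq_add_int (by rwa [CircleDeg1Lift.coe_pow]) hq),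
    fun k hk hkq m => g.iterate_ne_add_int_of_lt_of_gcd_eq_one htq hq hpq hk hkq m⟩
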